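/- arXiv:1707.03335 — 4 statements merged into one kernel-verified Lean document; each statement's English description precedes it below -/
import Mathlib

section
/- A financial market (𝓗,τ,≤,𝓘,𝓡) is strongly free of arbitrage if and only if the super-replication functional satisfies 𝓓(R) > 0 for every R ∈ 𝓡. -/
open Filter Topology MeasureTheory

section Defs

variable {H : Type*} [AddCommGroup H] [Module ℝ H] [TopologicalSpace H]

/-- An agent: a complete, transitive binary relation that is weakly monotone with respect to
the common order `le`, convex (upper contour sets are convex), and sequentially
τ-lower semicontinuous. -/
def IsAgent (le : H → H → Prop) (pre : H → H → Prop) : Prop :=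
  (∀ X Y, pre X Y ∨ pre Y X) ∧
  (∀ X Y Z, pre X Y → pre Y Z → pre X Z) ∧
  (∀ X Y, le X Y → pre X Y) ∧
  (∀ X, Convex ℝ {Z | pre X Z}) ∧
  (∀ (Xn : ℕ → H) (X Y : H),
    Tendsto Xn atTop (𝓝 X) → (∀ n, pre (Xn n) Y) → pre X Y)

/-- Viability of a financial market with common order `le`, net trades `I` and
relevant claims `R`. -/
def Viable (le : H → H → Prop) (I R : Set H) : Prop :=
  ∃ 𝒜 : Set (H → H → Prop),
    (∀ pre ∈ 𝒜, IsAgent le pre) ∧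
    (∀ pre ∈ 𝒜, ∀ l ∈ I, pre l 0) ∧
    (∀ r ∈ R, ∃ pre ∈ 𝒜, pre 0 r ∧ ¬ pre r 0)

/-- A free lunch with vanishing risk. -/
def FreeLunch (le : H → H → Prop) (I R : Set H) : Prop :=
  ∃ (l e : ℕ → H) (r : H),
    (∀ n, l n ∈ I) ∧ r ∈ R ∧ (∀ n, le 0 (e n)) ∧
    Tendsto e atTop (𝓝 0) ∧ ∀ n, le r (e n + l n)

/-- Strong absence of arbitrage: no free lunch with vanishing risk exists. -/
def StronglyFreeOfArbitrage (le : H → H → Prop) (I R : Set H) : Prop :=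
  ¬ FreeLunch le I R

/-- The super-replication functional `𝓓`, with values in `ℝ ∪ {±∞}` (and `inf ∅ = +∞`).
Here `const c` denotes the constant claim `c`. -/
noncomputable def superRep (le : H → H → Prop) (I : Set H) (const : ℝ → H) (X : H) : EReal :=
  sInf ((fun c : ℝ => (c : EReal)) ''
    {c : ℝ | ∃ l e : ℕ → H, (∀ n, l n ∈ I) ∧ (∀ n, le 0 (e n)) ∧
      Tendsto e atTop (𝓝 0) ∧ ∀ n, le X (const c + e n + l n)})

/-- A sublinear expectation: an `ℝ ∪ {+∞}`-valued functional that is monotone with respect to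
the common order, translation-invariant by constants, subadditive and positively homogeneous. -/
def IsSublinearExpectation (le : H → H → Prop) (const : ℝ → H) (E : H → EReal) : Prop :=
  (∀ X, E X ≠ ⊥) ∧
  (∀ X Y, le X Y → E X ≤ E Y) ∧
  (∀ (X : H) (c : ℝ), E (X + const c) = E X + (c : EReal)) ∧
  (∀ X Y, E (X + Y) ≤ E X + E Y) ∧
  (∀ (X : H) (l : ℝ), 0 < l → E (l • X) = (l : EReal) * E X)

/-- Full support: `𝓔(R) > 0` for every relevant claim `R`. -/
def HasFullSupport (R : Set H) (E : H → EReal) : Prop := ∀ r ∈ R, 0 < E r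

/-- The martingale property: `𝓔(ℓ) ≤ 0` for every net trade `ℓ`. -/
def HasMartingaleProperty (I : Set H) (E : H → EReal) : Prop := ∀ l ∈ I, E l ≤ 0

/-- Sequential τ-lower semicontinuity of an `EReal`-valued functional. -/
def SeqLSC (E : H → EReal) : Prop :=
  ∀ (Xn : ℕ → H) (X : H), Tendsto Xn atTop (𝓝 X) →
    E X ≤ Filter.liminf (fun n => E (Xn n)) atTop

/-- A martingale functional: a τ-continuous linear functional that is positive,
normalized (`φ(1) = 1`, where `one` is the constant claim `1`) and nonpositive on net trades. -/
def IsMartingaleFunctional (le : H → H → Prop) (I : Set H) (one : H) (φ : H →L[ℝ] ℝ) : Prop :=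
  (∀ X, le 0 X → 0 ≤ φ X) ∧ φ one = 1 ∧ ∀ l ∈ I, φ l ≤ 0

/-- The set `𝓠_ac` of absolutely continuous martingale functionals: martingale functionals
vanishing on every negligible claim. -/
def Qac (le : H → H → Prop) (I : Set H) (one : H) : Set (H →L[ℝ] ℝ) :=
  {φ | IsMartingaleFunctional le I one φ ∧ ∀ Z, le 0 Z → le Z 0 → φ Z = 0}

end Defs

/-! A free lunch with vanishing risk on `r` is exactly a super-replication of `r` at price `0`,
so it forces `𝓓(r) ≤ 0`. Conversely, if `𝓓(r) ≤ 0` then `r` is super-replicated at every price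
`1 / (k + 1)`; absorbing the price into the vanishing error term and extracting a diagonal
sequence (`𝓝 0` is countably generated since `τ` is metrizable) yields a free lunch. -/

theorem Filter.exists_tendsto_diagonal {α β : Type*} {l : Filter α} [l.IsCountablyGenerated]
    {L : Filter β} [L.NeBot] {f : ℕ → β → α} (hf : ∀ k, Tendsto (f k) L l) :
    ∃ b : ℕ → β, Tendsto (fun k => f k (b k)) atTop l := by
  obtain ⟨s, hs⟩ := l.exists_antitone_basis
  choose b hb using fun k => ((hf k).eventually_mem (hs.mem k)).exists
  exact ⟨b, hs.tendsto hb⟩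

section SuperReplication

variable {H : Type*} [AddCommGroup H] [TopologicalSpace H] {le : H → H → Prop} {I R : Set H}

def SuperReplicates (le : H → H → Prop) (I : Set H) (const : ℝ → H) (c : ℝ) (X : H) : Prop :=
  ∃ l e : ℕ → H, (∀ n, l n ∈ I) ∧ (∀ n, le 0 (e n)) ∧
    Tendsto e atTop (𝓝 0) ∧ ∀ n, le X (const c + e n + l n)

theorem superRep_le_of_superReplicates {const : ℝ → H} {c : ℝ} {X : H}
    (h : SuperReplicates le I const c X) : superRep le I const X ≤ c :=
  sInf_le ⟨c, h, rfl⟩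

theorem exists_superReplicates_lt_of_superRep_lt {const : ℝ → H} {c : ℝ} {X : H}
    (h : superRep le I const X < c) : ∃ d < c, SuperReplicates le I const d X := by
  obtain ⟨_, ⟨d, hd, rfl⟩, hdc⟩ := sInf_lt_iff.mp h
  exact ⟨d, EReal.coe_lt_coe_iff.mp hdc, hd⟩

variable [Module ℝ H]

theorem freeLunch_iff_exists_superReplicates_zero {u : H} :
    FreeLunch le I R ↔ ∃ r ∈ R, SuperReplicates le I (· • u) 0 r := by
  simp only [FreeLunch, SuperReplicates, zero_smul, zero_add]
  aesop

variable {u : H} (htrans : ∀ X Y Z, le X Y → le Y Z → le X Z)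
  (hadd : ∀ X Y W : H, le X Y → le (X + W) (Y + W))
  (hu : ∀ c d : ℝ, c ≤ d → le (c • u) (d • u))
include htrans hadd hu

theorem SuperReplicates.mono {c d : ℝ} {X : H} (hcd : c ≤ d)
    (h : SuperReplicates le I (· • u) c X) : SuperReplicates le I (· • u) d X := by
  obtain ⟨l, e, hl, he, het, hX⟩ := h
  exact ⟨l, e, hl, he, het, fun n => htrans _ _ _ (hX n) (hadd _ _ _ (hadd _ _ _ (hu c d hcd)))⟩

theorem freeLunch_of_forall_superReplicates [FirstCountableTopology H] [ContinuousAdd H]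
    [ContinuousSMul ℝ H] {r : H} (hr : r ∈ R)
    (hrep : ∀ k : ℕ, SuperReplicates le I (· • u) (1 / ((k : ℝ) + 1)) r) :
    FreeLunch le I R := by
  choose l e hl he het hdom using hrep
  obtain ⟨N, hN⟩ := Filter.exists_tendsto_diagonal het
  set δ : ℕ → H := fun k => (1 / ((k : ℝ) + 1)) • u
  have hδ : Tendsto δ atTop (𝓝 0) := by
    simpa only [zero_smul] using (tendsto_one_div_add_atTop_nhds_zero_nat (𝕜 := ℝ)).smul_const u
  have hδ_nonneg (k : ℕ) : le 0 (δ k) := by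
    simpa using hu 0 _ (by positivity)
  refine ⟨fun k => l k (N k), fun k => δ k + e k (N k), r, fun k => hl k (N k), hr,
    fun k => ?_, by simpa using hδ.add hN, fun k => hdom k (N k)⟩
  have h := hadd _ _ (δ k) (he k (N k))
  rw [zero_add, add_comm] at h
  exact htrans _ _ _ (hδ_nonneg k) h

theorem freeLunch_of_superRep_nonpos [FirstCountableTopology H] [ContinuousAdd H]
    [ContinuousSMul ℝ H] {r : H} (hr : r ∈ R) (hD : superRep le I (· • u) r ≤ 0) :
    FreeLunch le I R := by
  refine freeLunch_of_forall_superReplicates htrans hadd hu hr fun k => ?_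
  have hpos : (0 : EReal) < (1 / ((k : ℝ) + 1) : ℝ) := by exact_mod_cast (by positivity)
  obtain ⟨d, hd, hrep⟩ := exists_superReplicates_lt_of_superRep_lt (hD.trans_lt hpos)
  exact hrep.mono htrans hadd hu hd.le

end SuperReplication

theorem strongly_free_of_arbitrage_iff_superRep_positive_on_relevant_general
    {Ω : Type*}
    -- the commodity space 𝓗: a vector space of measurable functions containing constants,
    -- with a metrizable vector space topology τ
    (H : Submodule ℝ (Ω → ℝ)) [TopologicalSpace H]
    [TopologicalSpace.MetrizableSpace H] [IsTopologicalAddGroup H] [ContinuousSMul ℝ H]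
    (hconst : ∀ c : ℝ, (fun _ : Ω => c) ∈ H)
    -- the common order ≤ : a preorder compatible with the vector operations,
    -- agreeing with the order of ℝ on constants and extending the pointwise order
    (le : H → H → Prop)
    (htrans : ∀ X Y Z, le X Y → le Y Z → le X Z)
    (hadd : ∀ X Y W : H, le X Y → le (X + W) (Y + W))
    (hconst_iff : ∀ c d : ℝ,
      le ⟨fun _ => c, hconst c⟩ ⟨fun _ => d, hconst d⟩ ↔ c ≤ d)
    -- the net trades 𝓘: a convex cone containing 0
    (I : Set H)
    -- the relevant claims 𝓡: a convex subset of the positive claims 𝓟⁺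
    (R : Set H)
    :
    StronglyFreeOfArbitrage le I R ↔
      ∀ r ∈ R, 0 < superRep le I (fun c => ⟨fun _ => c, hconst c⟩) r := by
  set u : H := ⟨fun _ => 1, hconst 1⟩
  have hconst_eq (c : ℝ) : (⟨fun _ => c, hconst c⟩ : H) = c • u :=
    Subtype.ext (funext fun _ => (mul_one c).symm)
  have hu (c d : ℝ) (hcd : c ≤ d) : le (c • u) (d • u) := by
    simpa only [hconst_eq] using (hconst_iff c d).mpr hcd
  rw [funext hconst_eq]
  constructor
  · intro hNA r hr
    by_contra! hD
    exact hNA (freeLunch_of_superRep_nonpos htrans hadd hu hr hD)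
  · intro hpos hFL
    obtain ⟨r, hr, hrep⟩ := freeLunch_iff_exists_superReplicates_zero.mp hFL
    exact (hpos r hr).not_ge (superRep_le_of_superReplicates hrep)

theorem strongly_free_of_arbitrage_iff_superRep_positive_on_relevant
    {Ω : Type*} [MeasurableSpace Ω]
    -- the commodity space 𝓗: a vector space of measurable functions containing constants,
    -- with a metrizable vector space topology τ
    (H : Submodule ℝ (Ω → ℝ)) [TopologicalSpace H]
    [TopologicalSpace.MetrizableSpace H] [IsTopologicalAddGroup H] [ContinuousSMul ℝ H]
    (hmeas : ∀ X : H, Measurable (X : Ω → ℝ))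
    (hconst : ∀ c : ℝ, (fun _ : Ω => c) ∈ H)
    -- the common order ≤ : a preorder compatible with the vector operations,
    -- agreeing with the order of ℝ on constants and extending the pointwise order
    (le : H → H → Prop)
    (hrefl : ∀ X, le X X)
    (htrans : ∀ X Y Z, le X Y → le Y Z → le X Z)
    (hadd : ∀ X Y W : H, le X Y → le (X + W) (Y + W))
    (hsmul : ∀ (X Y : H) (c : ℝ), 0 ≤ c → le X Y → le (c • X) (c • Y))
    (hconst_iff : ∀ c d : ℝ,
      le ⟨fun _ => c, hconst c⟩ ⟨fun _ => d, hconst d⟩ ↔ c ≤ d)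
    (hpointwise : ∀ X Y : H, (∀ ω, (X : Ω → ℝ) ω ≤ (Y : Ω → ℝ) ω) → le X Y)
    -- the net trades 𝓘: a convex cone containing 0
    (I : Set H)
    (hI0 : (0 : H) ∈ I)
    (hIcone : ∀ x ∈ I, ∀ y ∈ I, ∀ a b : ℝ, 0 ≤ a → 0 ≤ b → a • x + b • y ∈ I)
    -- the relevant claims 𝓡: a convex subset of the positive claims 𝓟⁺
    (R : Set H)
    (hRpos : R ⊆ {X | le 0 X ∧ ¬ le X 0})
    (hRconv : Convex ℝ R)
    :
    StronglyFreeOfArbitrage le I R ↔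
      ∀ r ∈ R, 0 < superRep le I (fun c => ⟨fun _ => c, hconst c⟩) r :=
  strongly_free_of_arbitrage_iff_superRep_positive_on_relevant_general H hconst le htrans hadd
    hconst_iff I R
end

section
/- If a financial market (𝓗,τ,≤,𝓘,𝓡) is strongly free of arbitrage, then the effective domain dom(𝓓*) = {φ ∈ 𝓗′ : sup_{Y∈𝓗}(φ(Y) − 𝓓(Y)) < ∞} of the convex conjugate of the super-replication functional coincides with the set 𝓠_ac of absolutely continuous martingale functionals. -/
open Filter Topology MeasureTheory

/-- The convex conjugate `𝓓*` of an `EReal`-valued functional, on the topological dual `𝓗′`. -/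
noncomputable def conjugate {H : Type*} [AddCommGroup H] [Module ℝ H] [TopologicalSpace H]
    (D : H → EReal) (φ : H →L[ℝ] ℝ) : EReal :=
  ⨆ Y : H, (((φ Y : ℝ) : EReal) - D Y)

/-!
If `D* φ < ∞` then `φ ≤ D + s` for a real `s`. Since `D` is at most `0` on claims `≤ 0` and on
net trades, and `D c ≤ c` on constants, scaling these claims along rays forces `φ` to be positive,
nonpositive on net trades and normalized; positivity also gives absolute continuity. Conversely,
a martingale functional applied to a super-replication `X ≤ c + eₙ + ℓₙ` gives `φ X ≤ c + φ eₙ → c`,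
so `φ ≤ D` and `D* φ ≤ 0`.
-/

theorem nonpos_of_forall_pos_mul_le {x s : ℝ} (h : ∀ t : ℝ, 0 < t → t * x ≤ s) : x ≤ 0 := by
  by_contra! hx
  have hst := h ((|s| + 1) / x) (by positivity)
  rw [div_mul_cancel₀ _ hx.ne'] at hst
  linarith [le_abs_self s]

section Conjugate

variable {H : Type*} [AddCommGroup H] [Module ℝ H] [TopologicalSpace H]
  {D : H → EReal} {φ : H →L[ℝ] ℝ}

theorem exists_map_le_add_of_conjugate_ne_top (h : conjugate D φ ≠ ⊤) :
    ∃ s : ℝ, ∀ (Y : H) (c : ℝ), D Y ≤ c → φ Y ≤ c + s := by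
  obtain ⟨s, hs, -⟩ := EReal.lt_iff_exists_real_btwn.mp (lt_top_iff_ne_top.mpr h)
  refine ⟨s, fun Y c hc => ?_⟩
  have : ((φ Y - c : ℝ) : EReal) ≤ s :=
    calc ((φ Y - c : ℝ) : EReal) = (φ Y : EReal) - c := EReal.coe_sub _ _
      _ ≤ (φ Y : EReal) - D Y := EReal.sub_le_sub le_rfl hc
      _ ≤ conjugate D φ := le_iSup (fun Y => ((φ Y : ℝ) : EReal) - D Y) Y
      _ ≤ s := hs.le
  linarith [EReal.coe_le_coe_iff.mp this]

/-- Otherwise `φ (t • Y) - D (t • Y) ≥ t * (φ Y - a)` would be unbounded in `t`. -/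
theorem map_le_of_conjugate_ne_top (h : conjugate D φ ≠ ⊤) {Y : H} {a : ℝ}
    (hY : ∀ t : ℝ, 0 < t → D (t • Y) ≤ (t * a : ℝ)) : φ Y ≤ a := by
  obtain ⟨s, hs⟩ := exists_map_le_add_of_conjugate_ne_top h
  suffices φ Y - a ≤ 0 by linarith
  refine nonpos_of_forall_pos_mul_le (s := s) fun t ht => ?_
  have := hs _ _ (hY t ht)
  rw [map_smul, smul_eq_mul] at this
  linarith

theorem conjugate_nonpos_of_map_le (h : ∀ Y, (φ Y : EReal) ≤ D Y) : conjugate D φ ≤ 0 :=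
  iSup_le fun Y => EReal.sub_nonpos.mpr (h Y)

end Conjugate

section SuperReplication

variable {H : Type*} [AddCommGroup H] [Module ℝ H] [TopologicalSpace H]
  {le : H → H → Prop} {I : Set H} {one : H}

theorem superRep_le_of_le_add_mem (h00 : le 0 0) {X l : H} {c : ℝ} (hl : l ∈ I)
    (hX : le X (c • one + l)) : superRep le I (· • one) X ≤ c :=
  sInf_le ⟨c, ⟨fun _ => l, fun _ => 0, fun _ => hl, fun _ => h00, tendsto_const_nhds,
    fun _ => by simpa using hX⟩, rfl⟩

theorem superRep_le_zero_of_le_zero (h00 : le 0 0) (hI0 : 0 ∈ I) {X : H} (hX : le X 0) :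
    superRep le I (· • one) X ≤ 0 := by
  simpa using superRep_le_of_le_add_mem (one := one) (c := 0) h00 hI0 (by simpa using hX)

theorem superRep_le_zero_of_mem (hrefl : ∀ X, le X X) {l : H} (hl : l ∈ I) :
    superRep le I (· • one) l ≤ 0 := by
  simpa using
    superRep_le_of_le_add_mem (one := one) (c := 0) (hrefl 0) hl (by simpa using hrefl l)

theorem superRep_smul_one_le (hrefl : ∀ X, le X X) (hI0 : 0 ∈ I) (c : ℝ) :
    superRep le I (· • one) (c • one) ≤ c :=
  superRep_le_of_le_add_mem (hrefl 0) hI0 (by simpa using hrefl (c • one))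

theorem mem_Qac_of_conjugate_superRep_ne_top (hrefl : ∀ X, le X X)
    (hadd : ∀ X Y W : H, le X Y → le (X + W) (Y + W))
    (hsmul : ∀ (X Y : H) (c : ℝ), 0 ≤ c → le X Y → le (c • X) (c • Y))
    (hI0 : 0 ∈ I) (hI : ∀ l ∈ I, ∀ t : ℝ, 0 < t → t • l ∈ I) {φ : H →L[ℝ] ℝ}
    (h : conjugate (superRep le I (· • one)) φ ≠ ⊤) : φ ∈ Qac le I one := by
  have hneg : ∀ Y, le Y 0 → φ Y ≤ 0 := fun Y hY =>
    map_le_of_conjugate_ne_top h fun t ht => by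
      simpa using superRep_le_zero_of_le_zero (hrefl 0) hI0 (by simpa using hsmul Y 0 t ht.le hY)
  have hpos : ∀ X, le 0 X → 0 ≤ φ X := fun X hX => by
    simpa using hneg (-X) (by simpa using hadd 0 X (-X) hX)
  have hmart : ∀ l ∈ I, φ l ≤ 0 := fun l hl =>
    map_le_of_conjugate_ne_top h fun t ht => by
      simpa using superRep_le_zero_of_mem hrefl (hI l hl t ht)
  have hone_le : φ one ≤ 1 := map_le_of_conjugate_ne_top h fun t ht => by
    simpa using superRep_smul_one_le hrefl hI0 t
  have hneg_one_le : φ (-one) ≤ -1 := map_le_of_conjugate_ne_top h fun t ht => by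
    simpa using superRep_smul_one_le hrefl hI0 (-t)
  refine ⟨⟨hpos, le_antisymm hone_le (by simpa using hneg_one_le), hmart⟩,
    fun Z h0Z hZ0 => le_antisymm (hneg Z hZ0) (hpos Z h0Z)⟩

theorem map_le_superRep (hadd : ∀ X Y W : H, le X Y → le (X + W) (Y + W)) {φ : H →L[ℝ] ℝ}
    (hφ : IsMartingaleFunctional le I one φ) (Y : H) :
    (φ Y : EReal) ≤ superRep le I (· • one) Y := by
  obtain ⟨hpos, hone, hmart⟩ := hφ
  refine le_sInf ?_
  rintro _ ⟨c, ⟨l, e, hl, -, he, hY⟩, rfl⟩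
  have hbound : ∀ n, φ Y ≤ c + φ (e n) := fun n => by
    have := hpos _ (by simpa using hadd _ _ (-Y) (hY n))
    simp only [map_add, map_neg, map_smul, hone, smul_eq_mul, mul_one] at this
    linarith [hmart _ (hl n)]
  have hlim : Tendsto (fun n => c + φ (e n)) atTop (𝓝 c) := by
    simpa using tendsto_const_nhds.add ((φ.continuous.tendsto 0).comp he)
  exact EReal.coe_le_coe_iff.mpr (ge_of_tendsto' hlim hbound)

end SuperReplication

theorem conjugate_domain_eq_Qac_general
    {Ω : Type*}
    -- the commodity space 𝓗: a vector space of measurable functions containing constants,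
    -- with a metrizable vector space topology τ
    (H : Submodule ℝ (Ω → ℝ)) [TopologicalSpace H]
    (hconst : ∀ c : ℝ, (fun _ : Ω => c) ∈ H)
    -- the common order ≤ : a preorder compatible with the vector operations,
    -- agreeing with the order of ℝ on constants and extending the pointwise order
    (le : H → H → Prop)
    (hrefl : ∀ X, le X X)
    (hadd : ∀ X Y W : H, le X Y → le (X + W) (Y + W))
    (hsmul : ∀ (X Y : H) (c : ℝ), 0 ≤ c → le X Y → le (c • X) (c • Y))
    -- the net trades 𝓘: a convex cone containing 0
    (I : Set H)
    (hI0 : (0 : H) ∈ I)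
    (hIcone : ∀ x ∈ I, ∀ y ∈ I, ∀ a b : ℝ, 0 ≤ a → 0 ≤ b → a • x + b • y ∈ I)
    -- the relevant claims 𝓡: a convex subset of the positive claims 𝓟⁺
    (R : Set H)
    :
    StronglyFreeOfArbitrage le I R →
      {φ : H →L[ℝ] ℝ |
          conjugate (superRep le I (fun c => ⟨fun _ => c, hconst c⟩)) φ ≠ ⊤}
        = Qac le I (⟨fun _ => 1, hconst 1⟩ : H) := by
  intro _
  set one : H := ⟨fun _ => 1, hconst 1⟩
  have hconst_eq : (fun c => ⟨fun _ => c, hconst c⟩ : ℝ → H) = (· • one) := by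
    funext c
    ext
    simp [one]
  have hI : ∀ l ∈ I, ∀ t : ℝ, 0 < t → t • l ∈ I := fun l hl t ht => by
    simpa using hIcone l hl l hl t 0 ht.le le_rfl
  rw [hconst_eq]
  ext φ
  refine ⟨mem_Qac_of_conjugate_superRep_ne_top hrefl hadd hsmul hI0 hI, fun hφ => ?_⟩
  exact ne_top_of_le_ne_top EReal.zero_ne_top
    (conjugate_nonpos_of_map_le (map_le_superRep hadd hφ.1))

theorem conjugate_domain_eq_Qac
    {Ω : Type*} [MeasurableSpace Ω]
    -- the commodity space 𝓗: a vector space of measurable functions containing constants,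
    -- with a metrizable vector space topology τ
    (H : Submodule ℝ (Ω → ℝ)) [TopologicalSpace H]
    [TopologicalSpace.MetrizableSpace H] [IsTopologicalAddGroup H] [ContinuousSMul ℝ H]
    (hmeas : ∀ X : H, Measurable (X : Ω → ℝ))
    (hconst : ∀ c : ℝ, (fun _ : Ω => c) ∈ H)
    -- the common order ≤ : a preorder compatible with the vector operations,
    -- agreeing with the order of ℝ on constants and extending the pointwise order
    (le : H → H → Prop)
    (hrefl : ∀ X, le X X)
    (htrans : ∀ X Y Z, le X Y → le Y Z → le X Z)
    (hadd : ∀ X Y W : H, le X Y → le (X + W) (Y + W))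
    (hsmul : ∀ (X Y : H) (c : ℝ), 0 ≤ c → le X Y → le (c • X) (c • Y))
    (hconst_iff : ∀ c d : ℝ,
      le ⟨fun _ => c, hconst c⟩ ⟨fun _ => d, hconst d⟩ ↔ c ≤ d)
    (hpointwise : ∀ X Y : H, (∀ ω, (X : Ω → ℝ) ω ≤ (Y : Ω → ℝ) ω) → le X Y)
    -- the net trades 𝓘: a convex cone containing 0
    (I : Set H)
    (hI0 : (0 : H) ∈ I)
    (hIcone : ∀ x ∈ I, ∀ y ∈ I, ∀ a b : ℝ, 0 ≤ a → 0 ≤ b → a • x + b • y ∈ I)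
    -- the relevant claims 𝓡: a convex subset of the positive claims 𝓟⁺
    (R : Set H)
    (hRpos : R ⊆ {X | le 0 X ∧ ¬ le X 0})
    (hRconv : Convex ℝ R)
    :
    StronglyFreeOfArbitrage le I R →
      {φ : H →L[ℝ] ℝ |
          conjugate (superRep le I (fun c => ⟨fun _ => c, hconst c⟩)) φ ≠ ⊤}
        = Qac le I (⟨fun _ => 1, hconst 1⟩ : H) :=
  conjugate_domain_eq_Qac_general H hconst le hrefl hadd hsmul I hI0 hIcone R
end

section
/- In the strong-EMH setting under risk, the financial market is viable if and only if the common prior ℙ is a martingale measure, i.e. E_ℙ[ℓ] = 0 for every net trade ℓ ∈ 𝓘. In this case ℙ is the unique martingale measure: any probability measure ℚ on (Ω,𝓕) inducing a continuous linear functional on L¹(ℙ), satisfying E_ℚ[X] = 0 whenever E_ℙ[X] = 0 and E_ℚ[ℓ] ≤ 0 for every ℓ ∈ 𝓘, equals ℙ. -/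
open Filter Topology MeasureTheory

/-! Expectation under `ℙ` is a continuous linear functional `φ` on `L¹(ℙ)`, and the common order
is the pullback by `φ` of the order of `ℝ`. That pulled-back relation is itself an agent, and on its
own it supports the market as soon as `φ` vanishes on the net trades. Conversely, a supporting
family never lets a net trade be relevant; as `𝓘` is symmetric, `φ` can then be neither positive
nor negative on `𝓘`. Uniqueness: the centred indicator `1_s - ℙ(s)` has `ℙ`-mean zero, hence
`ℚ`-mean zero, i.e. `ℚ(s) = ℙ(s)`. -/

section

variable {H : Type*} [AddCommGroup H] [Module ℝ H] [TopologicalSpace H]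

theorem Viable.disjoint {le : H → H → Prop} {I R : Set H} (h : Viable le I R) : Disjoint I R := by
  obtain ⟨_, -, hI, hR⟩ := h
  refine Set.disjoint_left.2 fun l hlI hlR => ?_
  obtain ⟨pre, hpre, -, hnot⟩ := hR l hlR
  exact hnot (hI pre hpre l hlI)

theorem isAgent_comap_le (φ : H →L[ℝ] ℝ) :
    IsAgent (fun X Y => φ X ≤ φ Y) (fun X Y => φ X ≤ φ Y) :=
  ⟨fun _ _ => le_total _ _, fun _ _ _ => le_trans, fun _ _ => id,
    fun X => convex_halfSpace_ge φ.toLinearMap.isLinear (φ X),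
    fun _ _ _ hXn hle =>
      (isClosed_le φ.continuous continuous_const).mem_of_tendsto hXn (Eventually.of_forall hle)⟩

theorem viable_comap_le_iff (φ : H →L[ℝ] ℝ) (I : Submodule ℝ H) :
    Viable (fun X Y => φ X ≤ φ Y) I {X | 0 < φ X} ↔ ∀ l ∈ I, φ l = 0 := by
  refine ⟨fun h l hl => ?_, fun h => ⟨{fun X Y => φ X ≤ φ Y}, ?_, ?_, ?_⟩⟩
  · have hnot : ∀ l ∈ I, ¬ 0 < φ l := fun l hl => Set.disjoint_left.1 h.disjoint hl
    have hneg := hnot (-l) (I.neg_mem hl)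
    rw [map_neg, neg_pos, not_lt] at hneg
    exact le_antisymm (not_lt.1 (hnot l hl)) hneg
  · rintro _ rfl
    exact isAgent_comap_le φ
  · rintro _ rfl l hl
    simp [h l hl]
  · intro r hr
    exact ⟨_, rfl, by simpa using hr.le, by simpa using hr⟩

end

theorem MeasureTheory.Measure.eq_of_integral_eq_zero_imp_integral_eq_zero {Ω : Type*}
    [MeasurableSpace Ω] {P Q : Measure Ω} [IsProbabilityMeasure P] [IsProbabilityMeasure Q]
    (h : ∀ X : Ω → ℝ, Integrable X P → ∫ ω, X ω ∂P = 0 → ∫ ω, X ω ∂Q = 0) : Q = P := by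
  ext s hs
  rw [← measureReal_eq_measureReal_iff]
  have hind (μ : Measure Ω) [IsFiniteMeasure μ] : Integrable (s.indicator (1 : Ω → ℝ)) μ :=
    (integrable_const 1).indicator hs
  have hcentred := h (fun ω => s.indicator 1 ω - P.real s) ((hind P).sub (integrable_const _))
    (by rw [integral_sub (hind P) (integrable_const _)]; simp [hs])
  rw [integral_sub (hind Q) (integrable_const _)] at hcentred
  simpa [hs, sub_eq_zero] using hcentred

/-- **Strong Efficient Market Hypothesis under risk.** With `𝓗 = L¹(Ω,𝓕,ℙ)`, common order
given by comparison of `ℙ`-expectations, relevant claims the payoffs with positive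
`ℙ`-expectation, and net trades a linear subspace `𝓘`, the market is viable if and only if
the common prior `ℙ` is a martingale measure (`E_ℙ[ℓ] = 0` for all `ℓ ∈ 𝓘`); in this case
`ℙ` is the unique martingale measure. -/
theorem viable_iff_common_prior_is_martingale_measure
    {Ω : Type*} [MeasurableSpace Ω] (P : Measure Ω) [IsProbabilityMeasure P]
    (I : Submodule ℝ (Lp ℝ 1 P)) :
    (Viable (fun X Y : Lp ℝ 1 P => ∫ ω, X ω ∂P ≤ ∫ ω, Y ω ∂P)
        (I : Set (Lp ℝ 1 P)) {X : Lp ℝ 1 P | 0 < ∫ ω, X ω ∂P} ↔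
      ∀ l ∈ I, ∫ ω, (l : Lp ℝ 1 P) ω ∂P = 0) ∧
    (Viable (fun X Y : Lp ℝ 1 P => ∫ ω, X ω ∂P ≤ ∫ ω, Y ω ∂P)
        (I : Set (Lp ℝ 1 P)) {X : Lp ℝ 1 P | 0 < ∫ ω, X ω ∂P} →
      ∀ Q : Measure Ω, IsProbabilityMeasure Q →
        -- `ℚ` induces a continuous linear functional on `L¹(ℙ)`
        (∃ C : ℝ, ∀ X : Ω → ℝ, Integrable X P →
          Integrable X Q ∧ |∫ ω, X ω ∂Q| ≤ C * ∫ ω, |X ω| ∂P) →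
        -- `E_ℚ[X] = 0` whenever `E_ℙ[X] = 0`
        (∀ X : Ω → ℝ, Integrable X P → ∫ ω, X ω ∂P = 0 → ∫ ω, X ω ∂Q = 0) →
        -- `ℚ` is a martingale measure: `E_ℚ[ℓ] ≤ 0` for every net trade
        (∀ l ∈ I, ∫ ω, (l : Lp ℝ 1 P) ω ∂Q ≤ 0) →
        Q = P) := by
  have hE (X : Lp ℝ 1 P) : L1.integralCLM X = ∫ ω, X ω ∂P := by
    rw [← L1.integral_eq, L1.integral_eq_integral]
  have hviable := viable_comap_le_iff L1.integralCLM I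
  simp only [hE] at hviable
  exact ⟨hviable, fun _ Q _ _ hker _ => Measure.eq_of_integral_eq_zero_imp_integral_eq_zero hker⟩
end

section
/- In the finite discrete-time market setting, there exists an arbitrage if and only if there exists a one-step arbitrage: some t ∈ {1,…,T} and a bounded 𝓕_{t−1}-measurable function h : Ω → ℝ^d such that ℓ := h·(S_t − S_{t−1}) belongs to 𝓟⁺. -/
open Filter Topology MeasureTheory

section DiscreteMarket

variable {Ω : Type*} {d : ℕ}

/-- The preorder induced by a class `𝓩` of negligible claims:
`X ≤ Y` iff `X ≤ Y + Z` pointwise for some `Z ∈ 𝓩`. -/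
def leZ (Z : Set (Ω → ℝ)) (X Y : Ω → ℝ) : Prop :=
  ∃ z ∈ Z, ∀ ω, X ω ≤ Y ω + z ω

/-- The positive claims `𝓟⁺ = {X : 0 ≤ X ∧ ¬ X ≤ 0}` for the preorder induced by `𝓩`. -/
def PplusZ (Z : Set (Ω → ℝ)) : Set (Ω → ℝ) :=
  {X | leZ Z 0 X ∧ ¬ leZ Z X 0}

/-- The net trades of a finite discrete-time market: gains from trade
`Σ_{t=1}^T H_t·(S_t − S_{t−1})` for bounded `𝓕_{t−1}`-measurable integrands `H_t`. -/
def trades (F : ℕ → MeasurableSpace Ω) (S : ℕ → Ω → Fin d → ℝ) (T : ℕ) :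
    Set (Ω → ℝ) :=
  {l | ∃ Hs : ℕ → Ω → Fin d → ℝ,
    (∀ t, 1 ≤ t → t ≤ T →
      Measurable[F (t - 1)] (Hs t) ∧ ∃ C : ℝ, ∀ ω i, |Hs t ω i| ≤ C) ∧
    l = fun ω => ∑ t ∈ Finset.Icc 1 T, ∑ i, Hs t ω i * (S t ω i - S (t - 1) ω i)}

end DiscreteMarket

section PositiveClaims

variable {Ω : Type*} {Z : AddSubmonoid (Ω → ℝ)} {X Y : Ω → ℝ}

lemma leZ_refl (X : Ω → ℝ) : leZ (Z : Set (Ω → ℝ)) X X :=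
  ⟨0, Z.zero_mem, fun ω => by simp⟩

lemma zero_notMem_PplusZ : (0 : Ω → ℝ) ∉ PplusZ (Z : Set (Ω → ℝ)) :=
  fun h => h.2 (leZ_refl 0)

lemma mem_PplusZ_of_add_mem_of_leZ_zero (hXY : X + Y ∈ PplusZ (Z : Set (Ω → ℝ)))
    (hX : leZ (Z : Set (Ω → ℝ)) X 0) : Y ∈ PplusZ (Z : Set (Ω → ℝ)) := by
  obtain ⟨⟨w, hw, hwXY⟩, hXY_not_le⟩ := hXY
  obtain ⟨z, hz, hzX⟩ := hX
  refine ⟨⟨w + z, Z.add_mem hw hz, fun ω => ?_⟩, ?_⟩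
  · have hwω := hwXY ω
    have hzω := hzX ω
    simp only [Pi.zero_apply, Pi.add_apply] at hwω hzω ⊢
    linarith
  · rintro ⟨z', hz', hz'Y⟩
    refine hXY_not_le ⟨z + z', Z.add_mem hz hz', fun ω => ?_⟩
    have hzω := hzX ω
    have hz'ω := hz'Y ω
    simp only [Pi.zero_apply, Pi.add_apply] at hzω hz'ω ⊢
    linarith

/-- On `{X < 0}` we have `Y > X + Y ≥ 0`, and a bound `Y ≤ 0` there would force `X ≥ 0`
everywhere. -/
lemma indicator_mem_PplusZ_of_not_leZ (hZ_sup : ∀ z ∈ Z, ∀ w ∈ Z, z ⊔ w ∈ Z)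
    (hXY : leZ (Z : Set (Ω → ℝ)) 0 (X + Y)) (hX : ¬ leZ (Z : Set (Ω → ℝ)) 0 X) :
    {ω | X ω < 0}.indicator Y ∈ PplusZ (Z : Set (Ω → ℝ)) := by
  obtain ⟨w, hw, hwXY⟩ := hXY
  refine ⟨⟨w ⊔ 0, hZ_sup w hw 0 Z.zero_mem, fun ω => ?_⟩, ?_⟩
  · have hwω := hwXY ω
    have hw_le := le_max_left (w ω) 0
    have hw_nonneg := le_max_right (w ω) 0
    simp only [Set.indicator_apply, Set.mem_ofPred_eq, Pi.zero_apply, Pi.add_apply,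
      Pi.sup_apply] at hwω ⊢
    split_ifs <;> linarith
  · rintro ⟨z, hz, hzY⟩
    refine hX ⟨(z + w) ⊔ 0, hZ_sup _ (Z.add_mem hz hw) 0 Z.zero_mem, fun ω => ?_⟩
    have hwω := hwXY ω
    have hzω := hzY ω
    have hzw_le := le_max_left (z ω + w ω) 0
    have hzw_nonneg := le_max_right (z ω + w ω) 0
    simp only [Set.indicator_apply, Set.mem_ofPred_eq, Pi.zero_apply, Pi.add_apply,
      Pi.sup_apply] at hwω hzω ⊢
    split_ifs at hzω with hω
    · linarith
    · linarith [not_lt.mp hω]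

end PositiveClaims

section OneStepGain

variable {Ω : Type*} {d : ℕ}

def oneStepGain (S : ℕ → Ω → Fin d → ℝ) (t : ℕ) (h : Ω → Fin d → ℝ) : Ω → ℝ :=
  fun ω => ∑ i, h ω i * (S t ω i - S (t - 1) ω i)

lemma oneStepGain_indicator (S : ℕ → Ω → Fin d → ℝ) (t : ℕ) (A : Set Ω)
    (h : Ω → Fin d → ℝ) :
    oneStepGain S t (A.indicator h) = A.indicator (oneStepGain S t h) := by
  funext ω
  by_cases hω : ω ∈ A <;> simp [oneStepGain, hω]

lemma measurable_oneStepGain {m : MeasurableSpace Ω} {S : ℕ → Ω → Fin d → ℝ} {t : ℕ}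
    {h : Ω → Fin d → ℝ} (hh : Measurable h) (hS : Measurable (S t))
    (hS' : Measurable (S (t - 1))) : Measurable (oneStepGain S t h) := by
  unfold oneStepGain
  fun_prop

lemma exists_abs_indicator_le {h : Ω → Fin d → ℝ} (A : Set Ω)
    (hh : ∃ C : ℝ, ∀ ω i, |h ω i| ≤ C) : ∃ C : ℝ, ∀ ω i, |A.indicator h ω i| ≤ C := by
  obtain ⟨C, hC⟩ := hh
  refine ⟨C, fun ω i => ?_⟩
  by_cases hω : ω ∈ A
  · simpa [hω] using hC ω i
  · simpa [hω] using (abs_nonneg _).trans (hC ω i)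

variable {F : ℕ → MeasurableSpace Ω} {S : ℕ → Ω → Fin d → ℝ} {T : ℕ} {l : Ω → ℝ}

lemma measurable_of_mem_trades (hF_mono : ∀ s t, s ≤ t → F s ≤ F t)
    (hS_adapted : ∀ t, Measurable[F t] (S t)) (hl : l ∈ trades F S T) : Measurable[F T] l := by
  obtain ⟨Hs, hHs, rfl⟩ := hl
  refine Finset.measurable_sum _ fun t ht => ?_
  obtain ⟨ht1, htT⟩ := Finset.mem_Icc.mp ht
  have hprev := hF_mono (t - 1) T (by omega)
  exact measurable_oneStepGain (((hHs t ht1 htT).1).mono hprev le_rfl)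
    ((hS_adapted t).mono (hF_mono t T htT) le_rfl) ((hS_adapted (t - 1)).mono hprev le_rfl)

lemma oneStepGain_mem_trades {t : ℕ} {h : Ω → Fin d → ℝ} (ht1 : 1 ≤ t) (htT : t ≤ T)
    (hh : Measurable[F (t - 1)] h) (hh_bdd : ∃ C : ℝ, ∀ ω i, |h ω i| ≤ C) :
    oneStepGain S t h ∈ trades F S T := by
  classical
  refine ⟨fun s => if s = t then h else 0, fun s _ _ => ?_, ?_⟩
  · by_cases hst : s = t
    · subst hst
      simpa using ⟨hh, hh_bdd⟩
    · simpa [hst] using ⟨measurable_const, 0, fun _ _ => le_rfl⟩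
  · funext ω
    rw [Finset.sum_eq_single_of_mem t (Finset.mem_Icc.mpr ⟨ht1, htT⟩)]
    · simp [oneStepGain]
    · intro s _ hst
      simp [hst]

lemma eq_zero_of_mem_trades_zero (hl : l ∈ trades F S 0) : l = 0 := by
  obtain ⟨Hs, -, rfl⟩ := hl
  funext ω
  simp

lemma exists_add_oneStepGain_of_mem_trades_succ (hl : l ∈ trades F S (T + 1)) :
    ∃ G ∈ trades F S T, ∃ h : Ω → Fin d → ℝ, Measurable[F T] h ∧
      (∃ C : ℝ, ∀ ω i, |h ω i| ≤ C) ∧ l = G + oneStepGain S (T + 1) h := by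
  obtain ⟨Hs, hHs, rfl⟩ := hl
  obtain ⟨hmeas, hbdd⟩ := hHs (T + 1) (Nat.le_add_left 1 T) le_rfl
  refine ⟨_, ⟨Hs, fun t ht1 htT => hHs t ht1 (htT.trans T.le_succ), rfl⟩, Hs (T + 1), hmeas,
    hbdd, ?_⟩
  funext ω
  simp [Finset.sum_Icc_succ_top (Nat.le_add_left 1 T), oneStepGain]

end OneStepGain

/-- Split an arbitrage `G + g` into the gains `G` up to `T` and the last step `g`. If `G ≤ 0`,
then `g` is an arbitrage; if `G` is positive, induct; otherwise the last step restricted to the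
`𝓕_T`-measurable event `{G < 0}` is an arbitrage. -/
lemma exists_one_step_arbitrage_of_mem_trades {Ω : Type*} {d : ℕ} {F : ℕ → MeasurableSpace Ω}
    {S : ℕ → Ω → Fin d → ℝ} {Z : AddSubmonoid (Ω → ℝ)}
    (hF_mono : ∀ s t, s ≤ t → F s ≤ F t) (hS_adapted : ∀ t, Measurable[F t] (S t))
    (hZ_sup : ∀ z ∈ Z, ∀ w ∈ Z, z ⊔ w ∈ Z) {T : ℕ} {l : Ω → ℝ} (hl : l ∈ trades F S T)
    (hl_pos : l ∈ PplusZ (Z : Set (Ω → ℝ))) :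
    ∃ t, 1 ≤ t ∧ t ≤ T ∧
      ∃ h : Ω → Fin d → ℝ, Measurable[F (t - 1)] h ∧ (∃ C : ℝ, ∀ ω i, |h ω i| ≤ C) ∧
        oneStepGain S t h ∈ PplusZ (Z : Set (Ω → ℝ)) := by
  induction T generalizing l with
  | zero =>
    rw [eq_zero_of_mem_trades_zero hl] at hl_pos
    exact absurd hl_pos zero_notMem_PplusZ
  | succ T ih =>
    obtain ⟨G, hG, h, hh, hh_bdd, rfl⟩ := exists_add_oneStepGain_of_mem_trades_succ hl
    by_cases hG_nonneg : leZ (Z : Set (Ω → ℝ)) 0 G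
    · by_cases hG_nonpos : leZ (Z : Set (Ω → ℝ)) G 0
      · exact ⟨T + 1, Nat.le_add_left 1 T, le_rfl, h, hh, hh_bdd,
          mem_PplusZ_of_add_mem_of_leZ_zero hl_pos hG_nonpos⟩
      · obtain ⟨t, ht1, htT, rest⟩ := ih hG ⟨hG_nonneg, hG_nonpos⟩
        exact ⟨t, ht1, htT.trans T.le_succ, rest⟩
    · have hA : MeasurableSet[F T] {ω | G ω < 0} :=
        measurableSet_lt (measurable_of_mem_trades hF_mono hS_adapted hG) measurable_const
      refine ⟨T + 1, Nat.le_add_left 1 T, le_rfl, _, hh.indicator hA,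
        exists_abs_indicator_le _ hh_bdd, ?_⟩
      rw [oneStepGain_indicator]
      exact indicator_mem_PplusZ_of_not_leZ hZ_sup hl_pos.1 hG_nonneg

theorem exists_arbitrage_iff_exists_one_step_arbitrage_general
    {Ω : Type*} {d T : ℕ}
    -- the filtration
    (F : ℕ → MeasurableSpace Ω)
    (hF_mono : ∀ s t, s ≤ t → F s ≤ F t)
    -- the adapted asset price process, with nonnegative coordinates
    (S : ℕ → Ω → Fin d → ℝ)
    (hS_adapted : ∀ t, Measurable[F t] (S t))
    -- the negligible claims: a linear space of measurable functions, a lattice,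
    -- closed under pointwise convergence
    (Z : Submodule ℝ (Ω → ℝ))
    (hZ_sup : ∀ z ∈ Z, ∀ w ∈ Z, z ⊔ w ∈ Z) :
    (∃ l ∈ trades F S T, l ∈ PplusZ (Z : Set (Ω → ℝ))) ↔
      ∃ t, 1 ≤ t ∧ t ≤ T ∧
        ∃ h : Ω → Fin d → ℝ, Measurable[F (t - 1)] h ∧ (∃ C : ℝ, ∀ ω i, |h ω i| ≤ C) ∧
          (fun ω => ∑ i, h ω i * (S t ω i - S (t - 1) ω i)) ∈ PplusZ (Z : Set (Ω → ℝ)) := by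
  constructor
  · rintro ⟨l, hl, hl_pos⟩
    exact exists_one_step_arbitrage_of_mem_trades (Z := Z.toAddSubmonoid) hF_mono hS_adapted
      hZ_sup hl hl_pos
  · rintro ⟨t, ht1, htT, h, hh, hh_bdd, hpos⟩
    exact ⟨_, oneStepGain_mem_trades ht1 htT hh hh_bdd, hpos⟩

/-- **One-step arbitrage.** In a finite discrete-time market there exists an arbitrage if
and only if there exists a one-step arbitrage: some `t ∈ {1,…,T}` and a bounded
`𝓕_{t−1}`-measurable `h : Ω → ℝ^d` with `h·(S_t − S_{t−1}) ∈ 𝓟⁺`. -/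
theorem exists_arbitrage_iff_exists_one_step_arbitrage
    {Ω : Type*} {d T : ℕ} [MeasurableSpace Ω]
    -- the filtration
    (F : ℕ → MeasurableSpace Ω)
    (hF_mono : ∀ s t, s ≤ t → F s ≤ F t)
    (hF_le : ∀ t, F t ≤ (inferInstance : MeasurableSpace Ω))
    -- the adapted asset price process, with nonnegative coordinates
    (S : ℕ → Ω → Fin d → ℝ)
    (hS_adapted : ∀ t, Measurable[F t] (S t))
    (hS_nonneg : ∀ t ω i, 0 ≤ S t ω i)
    -- the negligible claims: a linear space of measurable functions, a lattice,
    -- closed under pointwise convergence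
    (Z : Submodule ℝ (Ω → ℝ))
    (hZ_meas : ∀ z ∈ Z, Measurable z)
    (hZ_sup : ∀ z ∈ Z, ∀ w ∈ Z, z ⊔ w ∈ Z)
    (hZ_inf : ∀ z ∈ Z, ∀ w ∈ Z, z ⊓ w ∈ Z)
    (hZ_closed : ∀ (zn : ℕ → Ω → ℝ) (z : Ω → ℝ), (∀ n, zn n ∈ Z) →
      (∀ ω, Tendsto (fun n => zn n ω) atTop (𝓝 (z ω))) → z ∈ Z) :
    (∃ l ∈ trades F S T, l ∈ PplusZ (Z : Set (Ω → ℝ))) ↔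
      ∃ t, 1 ≤ t ∧ t ≤ T ∧
        ∃ h : Ω → Fin d → ℝ, Measurable[F (t - 1)] h ∧ (∃ C : ℝ, ∀ ω i, |h ω i| ≤ C) ∧
          (fun ω => ∑ i, h ω i * (S t ω i - S (t - 1) ω i)) ∈ PplusZ (Z : Set (Ω → ℝ)) :=
  exists_arbitrage_iff_exists_one_step_arbitrage_general F hF_mono S hS_adapted Z hZ_sup
end
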